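/- Radius of the static ring phase wave: let N ≥ 2, u = exp(2πi/N) ∈ ℂ, 0 ≤ J < 1, 0 < K < 1, set a = sin(π/N)/(1 − cos(π/N)) and b = sin(3π/N)/(1 − cos(3π/N)) − sin(π/N)/(1 − cos(π/N)), assume 2a + J·b > 0, and define R = (N − 1 + K)/(2a + J·b). Then the ring phase wave configuration z_k = R·u^k, θ_k = 2πk/N + C (for any C ∈ ℝ) is a stationary state of the spatial dynamics: for every index k, (1/(N−1)) ∑_{j≠k} [ ((z_j − z_k)/|z_j − z_k|)·(1 + J·cos(θ_j − θ_k)) − ((z_j − z_k)/|z_j − z_k|²)·(1 − K·cos(θ_j − θ_k)) ] = 0. -/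

import Mathlib

/-!
Put `ψ m = u ^ m` and `v = u ^ (k + 1)`, so that `z (k + m) - z k = R v (ψ m - 1)` and
`cos (θ (k + m) - θ k) = Re (ψ m)`. Pairing the neighbour `k + m` with its mirror image `k - m`
replaces `ψ m` by its conjugate: the tangential components cancel, and since
`(w - 1) + (conj w - 1) = -‖w - 1‖²` on the unit circle the pair exerts the purely radial force
`-v (‖ψ m - 1‖ (1 + J Re ψ m) - (1 - K Re ψ m) / R)`. With `‖u ^ m - 1‖ = 2 sin (mπ/N)`,
`2 sin x cos 2x = sin 3x - sin x`, `∑ sin (mπ/N) = a`, `∑ sin (3mπ/N) = a + b` and `∑ Re u ^ m = 0`,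
the total radial force is a multiple of `2a + Jb - (N - 1 + K)/R`, which vanishes for the given `R`.
-/

open Complex ComplexConjugate Finset

lemma sum_range_sin_mul_of_exp_pow_eq_neg_one {x : ℝ} {n : ℕ} (h : exp (x * I) ^ n = -1) :
    ∑ m ∈ range n, Real.sin (m * x) = Real.sin x / (1 - Real.cos x) := by
  have hcos : Real.cos x ≠ 1 := by
    intro hc
    have hs : Real.sin x = 0 := by nlinarith [Real.sin_sq_add_cos_sq x]
    rw [exp_mul_I, ← ofReal_cos, ← ofReal_sin, hc, hs] at h
    norm_num at h
  have hw1 : exp (x * I) ≠ 1 := fun hw ↦ hcos (by simpa using congrArg re hw)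
  have hsum : ∑ m ∈ range n, Real.sin (m * x) = (∑ m ∈ range n, exp (x * I) ^ m).im := by
    rw [im_sum]
    refine sum_congr rfl fun m _ ↦ ?_
    rw [← exp_nat_mul, ← mul_assoc, ← exp_ofReal_mul_I_im]
    push_cast; rfl
  -- the geometric sum is `(w ^ n - 1) / (w - 1) = -2 / (w - 1)`
  rw [hsum, geom_sum_eq hw1, h, div_im, normSq_apply]
  simp only [sub_re, sub_im, exp_ofReal_mul_I_re, exp_ofReal_mul_I_im, neg_re, neg_im, one_re,
    one_im]
  rw [show (Real.cos x - 1) * (Real.cos x - 1) + (Real.sin x - 0) * (Real.sin x - 0)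
    = 2 * (1 - Real.cos x) by linear_combination Real.sin_sq_add_cos_sq x]
  have hden : 1 - Real.cos x ≠ 0 := sub_ne_zero.2 (Ne.symm hcos)
  field_simp
  ring

/-- The summand of the spatial dynamics, with `d = z j - z k` and `c = cos (θ j - θ k)`. -/
noncomputable def swarmForce (J K : ℝ) (d : ℂ) (c : ℝ) : ℂ :=
  d / ((‖d‖ : ℝ) : ℂ) * ((1 + J * c : ℝ) : ℂ) - d / ((‖d‖ : ℝ) : ℂ) ^ 2 * ((1 - K * c : ℝ) : ℂ)

noncomputable def pairBalance (J K R : ℝ) (w : ℂ) : ℝ :=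
  ‖w - 1‖ * (1 + J * w.re) - (1 - K * w.re) / R

lemma swarmForce_add_swarmForce_conj (J K : ℝ) {R : ℝ} (hR : 0 < R) {v w : ℂ} (hv : ‖v‖ = 1)
    (hw : ‖w‖ = 1) (hw1 : w ≠ 1) :
    swarmForce J K (R * v * (w - 1)) w.re + swarmForce J K (R * v * (conj w - 1)) w.re
      = -v * pairBalance J K R w := by
  have hn : 0 < ‖w - 1‖ := norm_pos_iff.2 (sub_ne_zero.2 hw1)
  have hnorm : ‖(R : ℂ) * v * (w - 1)‖ = R * ‖w - 1‖ := by simp [hv, abs_of_pos hR]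
  have hnorm' : ‖(R : ℂ) * v * (conj w - 1)‖ = R * ‖w - 1‖ := by
    rw [show conj w - 1 = conj (w - 1) by simp, norm_mul, norm_conj, ← norm_mul]
    exact hnorm
  have hsq : ‖w - 1‖ ^ 2 = 2 - 2 * w.re := by
    rw [Complex.sq_norm, normSq_sub, normSq_eq_norm_sq, hw]
    simp only [map_one, mul_one]
    ring
  have hsum : (w - 1) + (conj w - 1) = -((‖w - 1‖ ^ 2 : ℝ) : ℂ) := by
    have h := add_conj w
    rw [hsq]
    push_cast at h ⊢
    linear_combination h
  unfold swarmForce pairBalance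
  rw [hnorm, hnorm']
  have : (R : ℂ) ≠ 0 := by exact_mod_cast hR.ne'
  have : ((‖w - 1‖ : ℝ) : ℂ) ≠ 0 := by exact_mod_cast hn.ne'
  push_cast at hsum ⊢
  linear_combination (norm := skip)
    (R * v * ((1 + J * w.re) / (R * ‖w - 1‖) - (1 - K * w.re) / (R * ‖w - 1‖) ^ 2)) * hsum
  field_simp
  ring

section Pairing

variable {G : Type*} [AddCommGroup G] [Fintype G] [DecidableEq G] {M : Type*} [AddCommMonoid M]

lemma sum_erase_eq_sum_erase_zero_add (f : G → M) (k : G) :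
    ∑ j ∈ univ.erase k, f j = ∑ m ∈ univ.erase 0, f (k + m) :=
  (sum_equiv (Equiv.addLeft k) (by simp) (fun _ _ ↦ rfl)).symm

lemma sum_erase_zero_neg (f : G → M) :
    ∑ m ∈ univ.erase 0, f (-m) = ∑ m ∈ univ.erase 0, f m :=
  sum_equiv (Equiv.neg G) (by simp) (fun _ _ ↦ rfl)

theorem two_mul_sum_swarmForce_ring (ψ : AddChar G ℂ) (hψ : Function.Injective ψ)
    (J K : ℝ) {R : ℝ} (hR : 0 < R) {v c : ℂ} (hv : ‖v‖ = 1) (hc : c ≠ 0)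
    {z : G → ℂ} (hz : ∀ j, z j = R * v * ψ j) {θ : G → ℝ} (hθ : ∀ j, exp (θ j * I) = c * ψ j)
    (k : G) :
    2 * ∑ j ∈ univ.erase k, swarmForce J K (z j - z k) (Real.cos (θ j - θ k))
      = -(v * ψ k) * ((∑ m ∈ univ.erase 0, pairBalance J K R (ψ m) : ℝ) : ℂ) := by
  have hψk : ψ k ≠ 0 := by simp [← norm_ne_zero_iff, ψ.norm_apply]
  have hcos : ∀ m, Real.cos (θ (k + m) - θ k) = (ψ m).re := by
    intro m
    rw [← exp_ofReal_mul_I_re, ofReal_sub, sub_mul, exp_sub, hθ, hθ, AddChar.map_add_eq_mul]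
    field_simp
  have hdiff : ∀ m, z (k + m) - z k = R * (v * ψ k) * (ψ m - 1) := by
    intro m
    rw [hz, hz, AddChar.map_add_eq_mul]
    ring
  have hpair : ∀ m ∈ univ.erase 0,
      swarmForce J K (z (k + m) - z k) (Real.cos (θ (k + m) - θ k))
        + swarmForce J K (z (k + -m) - z k) (Real.cos (θ (k + -m) - θ k))
      = -(v * ψ k) * pairBalance J K R (ψ m) := by
    intro m hm
    have hm1 : ψ m ≠ 1 := fun h ↦ (mem_erase.1 hm).1 (hψ (h.trans ψ.map_zero_eq_one.symm))
    rw [hcos, hcos, hdiff, hdiff, ψ.map_neg_eq_conj, conj_re]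
    exact swarmForce_add_swarmForce_conj J K hR (by simp [hv, ψ.norm_apply]) (ψ.norm_apply m) hm1
  calc 2 * ∑ j ∈ univ.erase k, swarmForce J K (z j - z k) (Real.cos (θ j - θ k))
      = ∑ m ∈ univ.erase 0,
          (swarmForce J K (z (k + m) - z k) (Real.cos (θ (k + m) - θ k))
            + swarmForce J K (z (k + -m) - z k) (Real.cos (θ (k + -m) - θ k))) := by
        rw [sum_add_distrib, sum_erase_zero_neg (fun m ↦ swarmForce J K (z (k + m) - z k)
          (Real.cos (θ (k + m) - θ k))), two_mul, sum_erase_eq_sum_erase_zero_add]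
    _ = _ := by rw [sum_congr rfl hpair, ← mul_sum, ofReal_sum]

end Pairing

def finPowChar {M : Type*} [CommMonoid M] {N : ℕ} [NeZero N] {u : M} (hu : u ^ N = 1) :
    AddChar (Fin N) M where
  toFun m := u ^ (m : ℕ)
  map_zero_eq_one' := by simp
  map_add_eq_mul' x y := by simp only [Fin.val_add, ← pow_eq_pow_mod _ hu, pow_add]

@[simp]
lemma finPowChar_apply {M : Type*} [CommMonoid M] {N : ℕ} [NeZero N] {u : M} (hu : u ^ N = 1)
    (m : Fin N) : finPowChar hu m = u ^ (m : ℕ) := rfl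

lemma finPowChar_injective {M : Type*} [CommMonoid M] {N : ℕ} [NeZero N] {u : M}
    (hu : IsPrimitiveRoot u N) : Function.Injective (finPowChar hu.pow_eq_one) :=
  fun i j h ↦ Fin.ext (hu.pow_inj i.2 j.2 h)

lemma exp_two_pi_I_div_pow (N m : ℕ) :
    exp (2 * Real.pi * I / N) ^ m = exp ((m * (2 * Real.pi / N) : ℝ) * I) := by
  rw [← exp_nat_mul]; push_cast; ring_nf

lemma norm_exp_two_pi_I_div_pow_sub_one {N m : ℕ} (hm : m ≤ N) :
    ‖exp (2 * Real.pi * I / N) ^ m - 1‖ = 2 * Real.sin (m * (Real.pi / N)) := by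
  have hmN : (m : ℝ) * (Real.pi / N) ≤ Real.pi := by
    rcases Nat.eq_zero_or_pos N with rfl | hN
    · simp [Real.pi_nonneg]
    · rw [mul_div_left_comm, ← mul_div_assoc, div_le_iff₀ (by positivity)]
      gcongr
  rw [exp_two_pi_I_div_pow, mul_comm _ I, norm_exp_I_mul_ofReal_sub_one, Real.norm_eq_abs,
    show (m : ℝ) * (2 * Real.pi / N) / 2 = m * (Real.pi / N) by ring, abs_of_nonneg]
  exact mul_nonneg zero_le_two (Real.sin_nonneg_of_nonneg_of_le_pi (by positivity) hmN)

lemma exp_pi_div_mul_I_pow_of_odd {N p : ℕ} (hN : N ≠ 0) (hp : Odd p) :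
    exp ((p * Real.pi / N : ℝ) * I) ^ N = -1 := by
  rw [← exp_nat_mul, show (N : ℂ) * ((p * Real.pi / N : ℝ) * I) = p * (Real.pi * I) by
    push_cast; field_simp, exp_nat_mul, exp_pi_mul_I, hp.neg_one_pow]

lemma sum_range_re_pow_eq_zero {N : ℕ} (hN : 1 < N) {u : ℂ} (hu : IsPrimitiveRoot u N) :
    ∑ m ∈ range N, (u ^ m).re = 0 := by
  rw [← re_sum, hu.geom_sum_eq_zero hN, zero_re]

lemma sum_erase_zero_pairBalance_exp_two_pi_I_div {N : ℕ} [NeZero N] (hN : 2 ≤ N) {u : ℂ}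
    (hu : u = exp (2 * Real.pi * I / N)) (J K R : ℝ) :
    ∑ m ∈ univ.erase (0 : Fin N), pairBalance J K R (u ^ (m : ℕ))
      = 2 * (Real.sin (Real.pi / N) / (1 - Real.cos (Real.pi / N)))
        + J * (Real.sin (3 * Real.pi / N) / (1 - Real.cos (3 * Real.pi / N))
          - Real.sin (Real.pi / N) / (1 - Real.cos (Real.pi / N)))
        - (N - 1 + K) / R := by
  have hterm : ∀ m ∈ range N, pairBalance J K R (u ^ m) = 2 * Real.sin (m * (Real.pi / N))
        + J * (Real.sin (m * (3 * Real.pi / N)) - Real.sin (m * (Real.pi / N)))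
        - 1 / R + K / R * (u ^ m).re := by
    intro m hm
    have h2 := Real.two_mul_sin_mul_cos (m * (Real.pi / N)) (m * (2 * Real.pi / N))
    rw [show m * (Real.pi / N) - m * (2 * Real.pi / N) = -(m * (Real.pi / N)) by ring,
      show m * (Real.pi / N) + m * (2 * Real.pi / N) = m * (3 * Real.pi / N) by ring,
      Real.sin_neg] at h2
    rw [pairBalance, hu, norm_exp_two_pi_I_div_pow_sub_one (mem_range.1 hm).le,
      exp_two_pi_I_div_pow, exp_ofReal_mul_I_re]
    linear_combination J * h2
  have hs1 := sum_range_sin_mul_of_exp_pow_eq_neg_one (x := Real.pi / N) (n := N) (by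
    simpa using exp_pi_div_mul_I_pow_of_odd (NeZero.ne N) odd_one)
  have hs3 := sum_range_sin_mul_of_exp_pow_eq_neg_one (x := 3 * Real.pi / N) (n := N) (by
    simpa using exp_pi_div_mul_I_pow_of_odd (p := 3) (NeZero.ne N) (by decide))
  have hre := sum_range_re_pow_eq_zero (by omega) (hu ▸ isPrimitiveRoot_exp N (NeZero.ne N))
  rw [sum_erase_eq_sub (mem_univ _), Fin.sum_univ_eq_sum_range (pairBalance J K R <| u ^ ·),
    sum_congr rfl hterm]
  simp only [sum_add_distrib, sum_sub_distrib, ← mul_sum, sum_const, card_range, nsmul_eq_mul,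
    hs1, hs3, hre, Fin.val_zero, pow_zero, pairBalance, sub_self, norm_zero, one_re]
  ring

theorem static_ring_phase_wave_radius_general (N : ℕ) (hN : 2 ≤ N)
    (u : ℂ) (hu : u = Complex.exp (2 * (Real.pi : ℂ) * Complex.I / (N : ℂ)))
    (J : ℝ) (K : ℝ) (hK0 : 0 < K)
    (a b : ℝ)
    (ha : a = Real.sin (Real.pi / N) / (1 - Real.cos (Real.pi / N)))
    (hb : b = Real.sin (3 * Real.pi / N) / (1 - Real.cos (3 * Real.pi / N))
        - Real.sin (Real.pi / N) / (1 - Real.cos (Real.pi / N)))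
    (hpos : 0 < 2 * a + J * b)
    (R : ℝ) (hR : R = ((N : ℝ) - 1 + K) / (2 * a + J * b))
    (C : ℝ)
    (z : Fin N → ℂ) (hz : ∀ k : Fin N, z k = (R : ℂ) * u ^ ((k : ℕ) + 1))
    (θ : Fin N → ℝ) (hθ : ∀ k : Fin N, θ k = 2 * Real.pi * ((k : ℕ) + 1) / N + C) :
    ∀ k : Fin N, (1 / ((N : ℂ) - 1)) * ∑ j ∈ Finset.univ.erase k,
      ((z j - z k) / ((‖z j - z k‖ : ℝ) : ℂ)
          * (((1 + J * Real.cos (θ j - θ k) : ℝ) : ℂ))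
        - (z j - z k) / (((‖z j - z k‖ : ℝ) : ℂ) ^ 2)
          * (((1 - K * Real.cos (θ j - θ k) : ℝ) : ℂ))) = 0 := by
  intro k
  have : NeZero N := ⟨by omega⟩
  have hprim : IsPrimitiveRoot u N := hu ▸ isPrimitiveRoot_exp N (NeZero.ne N)
  have hN1 : (0 : ℝ) < N - 1 + K := by
    have : (2 : ℝ) ≤ N := by exact_mod_cast hN
    linarith
  have hR0 : 0 < R := hR ▸ div_pos hN1 hpos
  have hphase : ∀ j : Fin N, exp (θ j * I) = exp (C * I) * u * u ^ (j : ℕ) := by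
    intro j
    rw [mul_assoc, ← pow_succ', hu, ← exp_nat_mul, ← exp_add, hθ]
    push_cast
    ring_nf
  have key := two_mul_sum_swarmForce_ring (finPowChar hprim.pow_eq_one)
    (finPowChar_injective hprim) J K hR0 (hprim.norm'_eq_one (NeZero.ne N))
    (by simp [hprim.ne_zero (NeZero.ne N)]) (z := z)
    (fun j ↦ by rw [hz, finPowChar_apply, pow_succ']; ring) (θ := θ) hphase k
  simp only [finPowChar_apply] at key
  rw [sum_erase_zero_pairBalance_exp_two_pi_I_div hN hu, ← hb, ← ha,
    show (N - 1 + K) / R = 2 * a + J * b by rw [hR]; field_simp, sub_self, ofReal_zero,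
    mul_zero] at key
  change 1 / ((N : ℂ) - 1)
    * ∑ j ∈ univ.erase k, swarmForce J K (z j - z k) (Real.cos (θ j - θ k)) = 0
  rw [(mul_eq_zero.1 key).resolve_left two_ne_zero, mul_zero]

/-- Radius of the static ring phase wave: with `a = sin(π/N)/(1 − cos(π/N))`,
`b = sin(3π/N)/(1 − cos(3π/N)) − sin(π/N)/(1 − cos(π/N))` and
`R = (N − 1 + K)/(2a + Jb)`, the ring phase wave configuration `z_k = R u^k`,
`θ_k = 2πk/N + C` is stationary for the spatial dynamics with phase-dependent
attraction and repulsion. -/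
theorem static_ring_phase_wave_radius (N : ℕ) (hN : 2 ≤ N)
    (u : ℂ) (hu : u = Complex.exp (2 * (Real.pi : ℂ) * Complex.I / (N : ℂ)))
    (J : ℝ) (hJ0 : 0 ≤ J) (hJ1 : J < 1) (K : ℝ) (hK0 : 0 < K) (hK1 : K < 1)
    (a b : ℝ)
    (ha : a = Real.sin (Real.pi / N) / (1 - Real.cos (Real.pi / N)))
    (hb : b = Real.sin (3 * Real.pi / N) / (1 - Real.cos (3 * Real.pi / N))
        - Real.sin (Real.pi / N) / (1 - Real.cos (Real.pi / N)))
    (hpos : 0 < 2 * a + J * b)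
    (R : ℝ) (hR : R = ((N : ℝ) - 1 + K) / (2 * a + J * b))
    (C : ℝ)
    (z : Fin N → ℂ) (hz : ∀ k : Fin N, z k = (R : ℂ) * u ^ ((k : ℕ) + 1))
    (θ : Fin N → ℝ) (hθ : ∀ k : Fin N, θ k = 2 * Real.pi * ((k : ℕ) + 1) / N + C) :
    ∀ k : Fin N, (1 / ((N : ℂ) - 1)) * ∑ j ∈ Finset.univ.erase k,
      ((z j - z k) / ((‖z j - z k‖ : ℝ) : ℂ)
          * (((1 + J * Real.cos (θ j - θ k) : ℝ) : ℂ))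
        - (z j - z k) / (((‖z j - z k‖ : ℝ) : ℂ) ^ 2)
          * (((1 - K * Real.cos (θ j - θ k) : ℝ) : ℂ))) = 0 :=
  static_ring_phase_wave_radius_general N hN u hu J K hK0 a b ha hb hpos R hR C z hz θ hθ
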